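/- For every word w over {1,...,n}, the matrix ρ_n(w) has entry −∞ in position (P,Q) if and only if |P| ≠ |Q| or P ≰ Q; that is, the pattern of −∞ entries in the tropical matrix image of any word coincides with the pattern in the images of the generators. -/

import Mathlib

/-- The `i`-th smallest element (0-indexed) of a finite set of naturals
(`0` if `i` is out of range). -/
def nthEl (S : Finset ℕ) (i : ℕ) : ℕ := (S.sort (· ≤ ·)).getD i 0

/-- The order on subsets of equal cardinality: `S ≤ T` iff `|S| = |T|` and the `i`-th
smallest element of `S` is at most that of `T`, for all `i`. -/
def FLE (S T : Finset ℕ) : Prop :=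
  S.card = T.card ∧ ∀ i < T.card, nthEl S i ≤ nthEl T i

/-- The general order: `S ≤ T` iff `|S| ≥ |T|` and the `i`-th smallest element of `S`
is at most that of `T` for all `i < |T|`. -/
def GLE (S T : Finset ℕ) : Prop :=
  T.card ≤ S.card ∧ ∀ i < T.card, nthEl S i ≤ nthEl T i

/-- A word `w` over `{1,…,n}` is readable from `P` to `Q` if there is a chain
`P ≤ S₁ ≤ … ≤ S_{|w|} ≤ Q` of subsets of `{1,…,n}` with `wᵢ ∈ Sᵢ` for each `i`. -/
def Readable (n : ℕ) (w : List ℕ) (P Q : Finset ℕ) : Prop :=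
  ∃ L : List (Finset ℕ), L.length = w.length ∧ (∀ A ∈ L, A ⊆ Finset.Icc 1 n) ∧
    List.Chain' FLE (P :: (L ++ [Q])) ∧
    ∀ i (h : i < w.length), w.get ⟨i, h⟩ ∈ L.getD i ∅

/-- Tropical (max-plus) product of matrices indexed by subsets of `{1,…,n}`. -/
noncomputable def tmul (n : ℕ) (A B : Finset ℕ → Finset ℕ → WithBot ℝ) :
    Finset ℕ → Finset ℕ → WithBot ℝ :=
  fun P Q => ((Finset.Icc 1 n).powerset).sup fun R => A P R + B R Q

open Classical in
/-- The image of a generator `x ∈ {1,…,n}` under `ρₙ`. -/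
noncomputable def rhoGen (n : ℕ) (x : ℕ) (P Q : Finset ℕ) : WithBot ℝ :=
  if FLE P Q then
    (if ∃ S : Finset ℕ, S ⊆ Finset.Icc 1 n ∧ FLE P S ∧ FLE S Q ∧ x ∈ S then 1 else 0)
  else ⊥

open Classical in
/-- The image of a word under `ρₙ`, extended multiplicatively (the empty word maps to the
matrix with `0` in positions `(P,Q)` with `P ≤ Q` and `-∞` elsewhere). -/
noncomputable def rhoW (n : ℕ) : List ℕ → Finset ℕ → Finset ℕ → WithBot ℝ
  | [] => fun P Q => if FLE P Q then 0 else ⊥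
  | x :: w => tmul n (rhoGen n x) (rhoW n w)

/-- The Knuth relations over `{1,…,n}`. -/
inductive KnuthRel (n : ℕ) : List ℕ → List ℕ → Prop
  | k1 (a b c : ℕ) (h1 : 1 ≤ a) (h2 : a < b) (h3 : b ≤ c) (h4 : c ≤ n) :
      KnuthRel n [b, c, a] [b, a, c]
  | k2 (a b c : ℕ) (h1 : 1 ≤ a) (h2 : a ≤ b) (h3 : b < c) (h4 : c ≤ n) :
      KnuthRel n [c, a, b] [a, c, b]

/-- The plactic congruence on words: the equivalence generated by applying Knuth
relations inside words. Two words are related iff they represent the same element of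
the plactic monoid of rank `n`. -/
def PlacticRel (n : ℕ) : List ℕ → List ℕ → Prop :=
  Relation.EqvGen fun w v => ∃ p s x y, KnuthRel n x y ∧ w = p ++ x ++ s ∧ v = p ++ y ++ s

/-- A semistandard Young tableau over `{1,…,n}`, given by its list of rows
(row 0 is the bottom row): entries lie in `{1,…,n}`, rows weakly increase left to right,
row lengths weakly decrease going up, columns strictly increase going up
(i.e. strictly decrease reading down). -/
structure Tableau (n : ℕ) where
  rows : List (List ℕ)
  entries_mem : ∀ r ∈ rows, ∀ x ∈ r, x ∈ Finset.Icc 1 n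
  row_weak : ∀ r ∈ rows, List.Pairwise (· ≤ ·) r
  shape : ∀ i, (rows.getD (i + 1) []).length ≤ (rows.getD i []).length
  col_strict : ∀ i j, j < (rows.getD (i + 1) []).length →
    (rows.getD i []).getD j 0 < (rows.getD (i + 1) []).getD j 0

/-- The number of occurrences of the symbol `y` in row `x` (rows numbered from 1, from
the bottom) of the tableau `T`. -/
def rowCount {n : ℕ} (T : Tableau n) (x y : ℕ) : ℕ := (T.rows.getD (x - 1) []).count y

/-- The row reading of a tableau: rows read left to right, from top row to bottom row. -/
def rowReading {n : ℕ} (T : Tableau n) : List ℕ := T.rows.reverse.flatten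

/-- The `j`-th column of a tableau, read from top to bottom. -/
def colOf {n : ℕ} (T : Tableau n) (j : ℕ) : List ℕ :=
  ((List.range T.rows.length).reverse).filterMap fun i => (T.rows.getD i [])[j]?

/-- The column reading of a tableau: columns read top to bottom, left to right. -/
def colReading {n : ℕ} (T : Tableau n) : List ℕ :=
  ((List.range ((T.rows.getD 0 []).length)).map (colOf T)).flatten

/-- The `(k,m)`-completion of `S ⊆ {1,…,m}`: adjoin to `S` the `k - |S|` largest
elements of `{1,…,m} \ S`. -/
def completion (k m : ℕ) (S : Finset ℕ) : Finset ℕ :=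
  S ∪ ((((Finset.Icc 1 m) \ S).sort (· ≤ ·)).reverse.take (k - S.card)).toFinset

/-- Tropical (max-plus) product of `n × n` matrices over `ℝ ∪ {-∞}`. -/
noncomputable def tmulF (n : ℕ) (A B : Fin n → Fin n → WithBot ℝ) :
    Fin n → Fin n → WithBot ℝ :=
  fun i j => Finset.univ.sup fun k => A i k + B k j

/-- The tropical identity matrix. -/
noncomputable def tIdF (n : ℕ) : Fin n → Fin n → WithBot ℝ :=
  fun i j => if i = j then (0 : WithBot ℝ) else ⊥

theorem FLE.refl (S : Finset ℕ) : FLE S S := ⟨rfl, fun _ _ => le_rfl⟩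

theorem FLE.trans {A B C : Finset ℕ} (hAB : FLE A B) (hBC : FLE B C) : FLE A C :=
  ⟨hAB.1.trans hBC.1, fun i hi => (hAB.2 i (hBC.1 ▸ hi)).trans (hBC.2 i hi)⟩

def HasFLEPattern (n : ℕ) (A : Finset ℕ → Finset ℕ → WithBot ℝ) : Prop :=
  ∀ P Q, Q ⊆ Finset.Icc 1 n → (A P Q = ⊥ ↔ ¬ FLE P Q)

theorem tmul_eq_bot_iff (n : ℕ) (A B : Finset ℕ → Finset ℕ → WithBot ℝ) (P Q : Finset ℕ) :
    tmul n A B P Q = ⊥ ↔ ∀ R ⊆ Finset.Icc 1 n, A P R = ⊥ ∨ B R Q = ⊥ := by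
  simp only [tmul, Finset.sup_eq_bot_iff, Finset.mem_powerset, WithBot.add_eq_bot]

/-- `P ≤ Q` is witnessed by `R = Q`, and `P ≰ Q` forces `P ≰ R` or `R ≰ Q` for every `R`. -/
theorem HasFLEPattern.tmul {n : ℕ} {A B : Finset ℕ → Finset ℕ → WithBot ℝ}
    (hA : HasFLEPattern n A) (hB : HasFLEPattern n B) : HasFLEPattern n (tmul n A B) := by
  intro P Q hQ
  rw [tmul_eq_bot_iff]
  constructor
  · intro hbot hPQ
    rcases hbot Q hQ with hAPQ | hBQQ
    · exact (hA P Q hQ).mp hAPQ hPQ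
    · exact (hB Q Q hQ).mp hBQQ (FLE.refl Q)
  · intro hPQ R hR
    by_cases hPR : FLE P R
    · exact Or.inr ((hB R Q hQ).mpr fun hRQ => hPQ (hPR.trans hRQ))
    · exact Or.inl ((hA P R hR).mpr hPR)

theorem rhoGen_hasFLEPattern (n x : ℕ) : HasFLEPattern n (rhoGen n x) := by
  intro P Q _
  unfold rhoGen
  split_ifs <;> simp_all

theorem rhoW_nil_hasFLEPattern (n : ℕ) : HasFLEPattern n (rhoW n []) := by
  intro P Q _
  simp only [rhoW]
  split_ifs <;> simp_all

theorem rhoW_hasFLEPattern (n : ℕ) (w : List ℕ) : HasFLEPattern n (rhoW n w) := by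
  induction w with
  | nil => exact rhoW_nil_hasFLEPattern n
  | cons x w ih => exact (rhoGen_hasFLEPattern n x).tmul ih

theorem stmt7_general (n : ℕ) (w : List ℕ)
    (P Q : Finset ℕ) (hQ : Q ⊆ Finset.Icc 1 n) :
    rhoW n w P Q = ⊥ ↔ ¬ FLE P Q :=
  rhoW_hasFLEPattern n w P Q hQ

/-- for every word `w` over `{1,…,n}`, the matrix `ρₙ(w)` has entry `-∞`
in position `(P,Q)` if and only if `|P| ≠ |Q|` or `P ≰ Q` (i.e. iff `¬ FLE P Q`): the
pattern of `-∞` entries of the image of any word coincides with that of the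
generators. -/
theorem stmt7 (n : ℕ) (w : List ℕ) (hw : ∀ x ∈ w, x ∈ Finset.Icc 1 n)
    (P Q : Finset ℕ) (hP : P ⊆ Finset.Icc 1 n) (hQ : Q ⊆ Finset.Icc 1 n) :
    rhoW n w P Q = ⊥ ↔ ¬ FLE P Q :=
  stmt7_general n w P Q hQ
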